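/- arXiv:1606.06254 — 4 statements merged into one kernel-verified Lean document; each statement's English description precedes it below -/
import Mathlib

section
/- Let H = H1 ⊗ H2 where dim H1 = 2 and dim H2 = d. Let {|a_s⟩ ⊗ |b_s⟩ : s = 1,...,2d} be an orthonormal basis of H consisting of product vectors (an orthogonal product basis), where each |a_s⟩ ∈ H1 and |b_s⟩ ∈ H2 are unit vectors. Then for every s, the number of indices t ∈ {1,...,2d} with |a_t⟩ proportional to |a_s⟩ equals the number of indices t with ⟨a_s|a_t⟩ = 0. (Equivalently, each line [a] in the first factor occurs with the same multiplicity as its orthogonal complement line.) -/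
/-!
Let `P` be the set of indices whose first factor lies on the line `[a s]`, and `Q` the set of
those whose first factor is orthogonal to `a s`; since `dim H₁ = 2`, `Q` is the set of indices
whose first factor lies on the line `[w]` of a nonzero `w ⊥ a s`. First factors on a common line
are pairwise non-orthogonal, so the corresponding second factors are pairwise orthogonal, and
`|P| = dim span (b '' P)`, `|Q| = dim span (b '' Q)`.

Expanding `u ⊗ v` in the product basis shows that `v` lies in the span of the `b t` with
`⟪u, a t⟫ ≠ 0` and `⟪b t, v⟫ ≠ 0`. For `u = w` and `v = b r` with `r ∈ P`, such a `t` lies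
outside `P` and has `a t ⊥ a r`, i.e. `t ∈ Q`; so `span (b '' P) ≤ span (b '' Q)`, and `u = a s`
gives the reverse inclusion. Hence the two spans, and so `|P|` and `|Q|`, agree.
-/

/-- Concrete tensor product of two vectors in Euclidean spaces. -/
noncomputable def tensor2 {ι κ : Type*} [Fintype ι] [Fintype κ]
    (a : EuclideanSpace ℂ ι) (b : EuclideanSpace ℂ κ) :
    EuclideanSpace ℂ (ι × κ) :=
  WithLp.toLp 2 (fun p : ι × κ => a p.1 * b p.2)

open Module Submodule
open scoped InnerProductSpace

section InnerProduct

variable {𝕜 E : Type*} [RCLike 𝕜] [NormedAddCommGroup E] [InnerProductSpace 𝕜 E]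

theorem inner_ne_zero_of_eq_smul {x y u : E} {c c' : 𝕜} (hx : x ≠ 0) (hy : y ≠ 0)
    (hxu : x = c • u) (hyu : y = c' • u) : ⟪x, y⟫_𝕜 ≠ 0 := by
  subst hxu hyu
  have hc : c ≠ 0 := by rintro rfl; simp at hx
  have hc' : c' ≠ 0 := by rintro rfl; simp at hy
  have hu : u ≠ 0 := by rintro rfl; simp at hx
  simp [inner_smul_left, inner_smul_right, hc, hc', hu]

theorem inner_eq_zero_of_eq_smul {x y u : E} {c : 𝕜} (hy : y ≠ 0) (hyu : y = c • u)
    (h : ⟪x, y⟫_𝕜 = 0) : ⟪x, u⟫_𝕜 = 0 := by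
  have hc : c ≠ 0 := by rintro rfl; simp [hyu] at hy
  rw [hyu, inner_smul_right] at h
  exact (mul_eq_zero.mp h).resolve_left hc

theorem finrank_orthogonal_span_singleton_of_finrank_eq_two (h : finrank 𝕜 E = 2) {y : E}
    (hy : y ≠ 0) : finrank 𝕜 (𝕜 ∙ y)ᗮ = 1 :=
  haveI : Fact (finrank 𝕜 E = 1 + 1) := ⟨h⟩
  finrank_orthogonal_span_singleton hy

theorem exists_ne_zero_inner_eq_zero_of_finrank_eq_two (h : finrank 𝕜 E = 2) {y : E}
    (hy : y ≠ 0) : ∃ w : E, w ≠ 0 ∧ ⟪y, w⟫_𝕜 = 0 := by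
  have hrank := finrank_orthogonal_span_singleton_of_finrank_eq_two h hy
  obtain ⟨w, hw, hw0⟩ := exists_mem_ne_zero_of_ne_bot (p := (𝕜 ∙ y)ᗮ) fun hbot => by
    rw [hbot, finrank_bot] at hrank
    exact zero_ne_one hrank
  exact ⟨w, hw0, mem_orthogonal_singleton_iff_inner_right.mp hw⟩

theorem exists_smul_eq_of_inner_eq_zero_of_finrank_eq_two (h : finrank 𝕜 E = 2) {x y z : E}
    (hy : y ≠ 0) (hz : z ≠ 0) (hyx : ⟪y, x⟫_𝕜 = 0) (hyz : ⟪y, z⟫_𝕜 = 0) :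
    ∃ c : 𝕜, x = c • z := by
  have hz' : (⟨z, mem_orthogonal_singleton_iff_inner_right.mpr hyz⟩ : (𝕜 ∙ y)ᗮ) ≠ 0 := by
    simpa using hz
  obtain ⟨c, hc⟩ := (finrank_eq_one_iff_of_nonzero' _ hz').mp
    (finrank_orthogonal_span_singleton_of_finrank_eq_two h hy)
    ⟨x, mem_orthogonal_singleton_iff_inner_right.mpr hyx⟩
  exact ⟨c, (congrArg Subtype.val hc).symm⟩

end InnerProduct

section TensorProduct

variable {ι κ σ : Type*} [Fintype ι] [Fintype κ]

theorem inner_tensor2 (a a' : EuclideanSpace ℂ ι) (b b' : EuclideanSpace ℂ κ) :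
    ⟪tensor2 a b, tensor2 a' b'⟫_ℂ = ⟪a, a'⟫_ℂ * ⟪b, b'⟫_ℂ := by
  simp only [PiLp.inner_apply, RCLike.inner_apply, tensor2]
  rw [Finset.sum_mul_sum, ← Finset.sum_product']
  refine Finset.sum_congr rfl fun p _ => ?_
  simp only [map_mul]
  ring

@[simp]
theorem tensor2_zero_left (b : EuclideanSpace ℂ κ) : tensor2 (0 : EuclideanSpace ℂ ι) b = 0 := by
  ext p; simp [tensor2]

@[simp]
theorem tensor2_zero_right (a : EuclideanSpace ℂ ι) : tensor2 a (0 : EuclideanSpace ℂ κ) = 0 := by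
  ext p; simp [tensor2]

variable {a : σ → EuclideanSpace ℂ ι} {b : σ → EuclideanSpace ℂ κ}

namespace Orthonormal

theorem tensor2_left_ne_zero (honb : Orthonormal ℂ fun s => tensor2 (a s) (b s)) (t : σ) :
    a t ≠ 0 := fun h => honb.ne_zero t (by simp [h])

theorem tensor2_right_ne_zero (honb : Orthonormal ℂ fun s => tensor2 (a s) (b s)) (t : σ) :
    b t ≠ 0 := fun h => honb.ne_zero t (by simp [h])

theorem inner_mul_inner_eq_zero (honb : Orthonormal ℂ fun s => tensor2 (a s) (b s)) {t r : σ}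
    (htr : t ≠ r) : ⟪a t, a r⟫_ℂ * ⟪b t, b r⟫_ℂ = 0 := by
  rw [← inner_tensor2]
  exact honb.2 htr

variable [Fintype σ]

theorem mem_span_image_tensor2_right (honb : Orthonormal ℂ fun s => tensor2 (a s) (b s))
    (hspan : span ℂ (Set.range fun s => tensor2 (a s) (b s)) = ⊤)
    {u : EuclideanSpace ℂ ι} (hu : u ≠ 0) (v : EuclideanSpace ℂ κ) :
    v ∈ span ℂ (b '' {t | ⟪u, a t⟫_ℂ ≠ 0 ∧ ⟪b t, v⟫_ℂ ≠ 0}) := by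
  set S := {t | ⟪u, a t⟫_ℂ ≠ 0 ∧ ⟪b t, v⟫_ℂ ≠ 0}
  rw [← (span ℂ (b '' S)).orthogonal_orthogonal, mem_orthogonal]
  intro y hy
  have hyb : ∀ t ∈ S, ⟪y, b t⟫_ℂ = 0 := fun t ht =>
    (mem_orthogonal' _ y).mp hy _ (subset_span ⟨t, ht, rfl⟩)
  -- Parseval: `⟪u, u⟫ * ⟪y, v⟫ = ⟪u ⊗ y, u ⊗ v⟫` is a sum of vanishing terms.
  have hparseval :=
    (OrthonormalBasis.mk honb hspan.ge).sum_inner_mul_inner (tensor2 u y) (tensor2 u v)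
  simp only [OrthonormalBasis.coe_mk, inner_tensor2] at hparseval
  rw [Finset.sum_eq_zero fun t _ => ?_] at hparseval
  · have huu : ⟪u, u⟫_ℂ ≠ 0 := inner_self_ne_zero.mpr hu
    exact (mul_eq_zero.mp hparseval.symm).resolve_left huu
  by_cases ht : t ∈ S
  · simp [hyb t ht]
  · rcases not_and_or.mp ht with h | h <;> simp_all

theorem span_image_le (honb : Orthonormal ℂ fun s => tensor2 (a s) (b s))
    (hspan : span ℂ (Set.range fun s => tensor2 (a s) (b s)) = ⊤)
    {u : EuclideanSpace ℂ ι} (hu : u ≠ 0) {S T : Set σ} (hS : ∀ r ∈ S, ⟪u, a r⟫_ℂ = 0)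
    (hT : ∀ t, ∀ r ∈ S, ⟪a t, a r⟫_ℂ = 0 → t ∈ T) :
    span ℂ (b '' S) ≤ span ℂ (b '' T) := by
  refine span_le.mpr ?_
  rintro _ ⟨r, hr, rfl⟩
  refine span_mono ?_ (honb.mem_span_image_tensor2_right hspan hu (b r))
  rintro _ ⟨t, ⟨hut, hbtr⟩, rfl⟩
  have htr : t ≠ r := by rintro rfl; exact hut (hS t hr)
  exact ⟨t, hT t r hr ((mul_eq_zero.mp (honb.inner_mul_inner_eq_zero htr)).resolve_right hbtr),
    rfl⟩

theorem ncard_eq_finrank_span_image (honb : Orthonormal ℂ fun s => tensor2 (a s) (b s))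
    {u : EuclideanSpace ℂ ι} {S : Set σ} (hS : ∀ t ∈ S, ∃ c : ℂ, a t = c • u) :
    S.ncard = finrank ℂ (span ℂ (b '' S)) := by
  classical
  have hli : LinearIndependent ℂ fun t : S => b t := by
    refine linearIndependent_of_ne_zero_of_inner_eq_zero (fun t => honb.tensor2_right_ne_zero t)
      fun t r htr => ?_
    have htr' : (t : σ) ≠ r := Subtype.coe_injective.ne htr
    obtain ⟨c, hc⟩ := hS t t.2
    obtain ⟨c', hc'⟩ := hS r r.2
    exact (mul_eq_zero.mp (honb.inner_mul_inner_eq_zero htr')).resolve_left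
      (inner_ne_zero_of_eq_smul (honb.tensor2_left_ne_zero t) (honb.tensor2_left_ne_zero r) hc hc')
  rw [Set.image_eq_range, finrank_span_eq_card hli, Set.ncard_eq_toFinset_card', Set.toFinset_card]

end Orthonormal

end TensorProduct

theorem stmt0_general (d : ℕ)
    (a : Fin (2 * d) → EuclideanSpace ℂ (Fin 2))
    (b : Fin (2 * d) → EuclideanSpace ℂ (Fin d))
    (honb : Orthonormal ℂ (fun s => tensor2 (a s) (b s)))
    (hspan : Submodule.span ℂ (Set.range fun s => tensor2 (a s) (b s)) = ⊤)
    (s : Fin (2 * d)) :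
    {t | ∃ c : ℂ, a t = c • a s}.ncard
      = {t | (inner ℂ (a s) (a t) : ℂ) = 0}.ncard := by
  set P := {t | ∃ c : ℂ, a t = c • a s}
  set Q := {t | ⟪a s, a t⟫_ℂ = 0}
  have h2 : finrank ℂ (EuclideanSpace ℂ (Fin 2)) = 2 := finrank_euclideanSpace_fin
  have hs := honb.tensor2_left_ne_zero s
  obtain ⟨w, hw, hsw⟩ := exists_ne_zero_inner_eq_zero_of_finrank_eq_two h2 hs
  have hws : ⟪w, a s⟫_ℂ = 0 := inner_eq_zero_symm.mp hsw
  have hQ : ∀ t ∈ Q, ∃ c : ℂ, a t = c • w := fun t ht =>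
    exists_smul_eq_of_inner_eq_zero_of_finrank_eq_two h2 hs hw ht hsw
  have hPQ : span ℂ (b '' P) ≤ span ℂ (b '' Q) := by
    refine honb.span_image_le hspan hw ?_ fun t r ⟨c, hc⟩ h => ?_
    · rintro r ⟨c, hc⟩
      rw [hc, inner_smul_right, hws, mul_zero]
    · exact inner_eq_zero_symm.mp (inner_eq_zero_of_eq_smul (honb.tensor2_left_ne_zero r) hc h)
  have hQP : span ℂ (b '' Q) ≤ span ℂ (b '' P) := by
    refine honb.span_image_le hspan hs (fun r hr => hr) fun t r hr h => ?_
    obtain ⟨c, hc⟩ := hQ r hr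
    exact exists_smul_eq_of_inner_eq_zero_of_finrank_eq_two h2 hw hs
      (inner_eq_zero_symm.mp (inner_eq_zero_of_eq_smul (honb.tensor2_left_ne_zero r) hc h)) hws
  rw [honb.ncard_eq_finrank_span_image (S := P) fun _ => id, honb.ncard_eq_finrank_span_image hQ,
    le_antisymm hPQ hQP]

/-- In a `2 ⊗ d` orthogonal product basis, for every element `s`, the number of indices `t`
whose first factor is proportional to that of `s` equals the number of indices `t` whose
first factor is orthogonal to that of `s`. -/
theorem stmt0 (d : ℕ)
    (a : Fin (2 * d) → EuclideanSpace ℂ (Fin 2))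
    (b : Fin (2 * d) → EuclideanSpace ℂ (Fin d))
    (ha : ∀ s, ‖a s‖ = 1) (hb : ∀ s, ‖b s‖ = 1)
    (honb : Orthonormal ℂ (fun s => tensor2 (a s) (b s)))
    (hspan : Submodule.span ℂ (Set.range fun s => tensor2 (a s) (b s)) = ⊤)
    (s : Fin (2 * d)) :
    {t | ∃ c : ℂ, a t = c • a s}.ncard
      = {t | (inner ℂ (a s) (a t) : ℂ) = 0}.ncard :=
  stmt0_general d a b honb hspan s
end

section
/- Let u ⊗ v and x ⊗ y be two orthogonal product vectors in H1 ⊗ H2 (finite-dimensional Hilbert spaces) with u not proportional to x and v not proportional to y. Then any product vector in the 2-dimensional subspace spanned by u⊗v and x⊗y is proportional to u⊗v or to x⊗y. -/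
/-- `y` is not proportional to `x`. -/
def NonProp {E : Type*} [AddCommGroup E] [Module ℂ E] (x y : E) : Prop :=
  ¬ ∃ c : ℂ, y = c • x

/-! If `p ⊗ q = a • u ⊗ v + b • x ⊗ y` with `b ≠ 0`, contract the second factor against a vector
`w ⊥ v` with `⟪w, y⟫ ≠ 0`, which exists because `y ∉ ℂ ∙ v`: this kills `u ⊗ v` and shows `p ∝ x`.
Contracting the first factor in the same way gives `q ∝ y`, hence `p ⊗ q ∝ x ⊗ y`. -/

open scoped InnerProductSpace ComplexConjugate

lemma Submodule.exists_mem_orthogonal_inner_ne_zero {𝕜 E : Type*} [RCLike 𝕜]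
    [NormedAddCommGroup E] [InnerProductSpace 𝕜 E] (K : Submodule 𝕜 E) [K.HasOrthogonalProjection]
    {y : E} (hy : y ∉ K) : ∃ w ∈ Kᗮ, ⟪w, y⟫_𝕜 ≠ 0 := by
  by_contra! h
  exact hy (K.orthogonal_orthogonal ▸ (Kᗮ.mem_orthogonal y).mpr h)

lemma eq_smul_of_smul_eq_smul {K E : Type*} [Field K] [AddCommGroup E] [Module K E]
    {α γ : K} {P X : E} (h : α • P = γ • X) (hγ : γ ≠ 0) (hX : X ≠ 0) : P = (α⁻¹ * γ) • X := by
  have hα : α ≠ 0 := by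
    rintro rfl
    exact smul_ne_zero hγ hX (by rw [← h, zero_smul])
  rw [mul_smul, ← h, inv_smul_smul₀ hα]

lemma NonProp.notMem_span_singleton {E : Type*} [AddCommGroup E] [Module ℂ E] {x y : E}
    (h : NonProp x y) : y ∉ ℂ ∙ x :=
  fun hy => h ((Submodule.mem_span_singleton.mp hy).imp fun _ => Eq.symm)

lemma NonProp.ne_zero {E : Type*} [AddCommGroup E] [Module ℂ E] {x y : E} (h : NonProp x y) :
    y ≠ 0 :=
  fun hy => h ⟨0, by rw [hy, zero_smul]⟩

section Contraction

variable {ι κ : Type*} [Fintype ι] [Fintype κ]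

lemma tensor2_smul_smul (s t : ℂ) (a : EuclideanSpace ℂ ι) (b : EuclideanSpace ℂ κ) :
    tensor2 (s • a) (t • b) = (s * t) • tensor2 a b := by
  ext ⟨i, j⟩
  simp only [tensor2, PiLp.smul_apply, smul_eq_mul]
  ring

noncomputable def contractSnd (w : EuclideanSpace ℂ κ) :
    EuclideanSpace ℂ (ι × κ) →ₗ[ℂ] EuclideanSpace ℂ ι where
  toFun z := WithLp.toLp 2 fun i => ∑ j, conj (w j) * z (i, j)
  map_add' z z' := by ext i; simp [mul_add, Finset.sum_add_distrib]
  map_smul' c z := by ext i; simp [Finset.mul_sum, mul_left_comm]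

noncomputable def contractFst (w : EuclideanSpace ℂ ι) :
    EuclideanSpace ℂ (ι × κ) →ₗ[ℂ] EuclideanSpace ℂ κ where
  toFun z := WithLp.toLp 2 fun j => ∑ i, conj (w i) * z (i, j)
  map_add' z z' := by ext j; simp [mul_add, Finset.sum_add_distrib]
  map_smul' c z := by ext j; simp [Finset.mul_sum, mul_left_comm]

lemma contractSnd_tensor2 (w : EuclideanSpace ℂ κ) (a : EuclideanSpace ℂ ι)
    (b : EuclideanSpace ℂ κ) : contractSnd w (tensor2 a b) = ⟪w, b⟫_ℂ • a := by
  ext i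
  simp only [contractSnd, tensor2, LinearMap.coe_mk, AddHom.coe_mk, PiLp.smul_apply, smul_eq_mul,
    PiLp.inner_apply, RCLike.inner_apply, Finset.sum_mul]
  exact Finset.sum_congr rfl fun _ _ => by ring

lemma contractFst_tensor2 (w : EuclideanSpace ℂ ι) (a : EuclideanSpace ℂ ι)
    (b : EuclideanSpace ℂ κ) : contractFst w (tensor2 a b) = ⟪w, a⟫_ℂ • b := by
  ext j
  simp only [contractFst, tensor2, LinearMap.coe_mk, AddHom.coe_mk, PiLp.smul_apply, smul_eq_mul,
    PiLp.inner_apply, RCLike.inner_apply, Finset.sum_mul]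
  exact Finset.sum_congr rfl fun _ _ => by ring

end Contraction

theorem stmt8_general (d₁ d₂ : ℕ)
    (u x : EuclideanSpace ℂ (Fin d₁)) (v y : EuclideanSpace ℂ (Fin d₂))
    (hnp₁ : NonProp u x) (hnp₂ : NonProp v y)
    (p : EuclideanSpace ℂ (Fin d₁)) (q : EuclideanSpace ℂ (Fin d₂))
    (hmem : tensor2 p q ∈
      Submodule.span ℂ ({tensor2 u v, tensor2 x y} : Set (EuclideanSpace ℂ (Fin d₁ × Fin d₂)))) :
    (∃ t : ℂ, tensor2 p q = t • tensor2 u v) ∨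
    (∃ t : ℂ, tensor2 p q = t • tensor2 x y) := by
  obtain ⟨a, b, hab⟩ := Submodule.mem_span_pair.mp hmem
  by_cases hb : b = 0
  · exact .inl ⟨a, by rw [← hab, hb, zero_smul, add_zero]⟩
  obtain ⟨w, hwv, hwy⟩ := (ℂ ∙ v).exists_mem_orthogonal_inner_ne_zero hnp₂.notMem_span_singleton
  obtain ⟨w', hw'u, hw'x⟩ := (ℂ ∙ u).exists_mem_orthogonal_inner_ne_zero hnp₁.notMem_span_singleton
  rw [Submodule.mem_orthogonal_singleton_iff_inner_left] at hwv hw'u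
  have hp : ⟪w, q⟫_ℂ • p = (b * ⟪w, y⟫_ℂ) • x := by
    simpa [contractSnd_tensor2, hwv, smul_smul] using congrArg (contractSnd w) hab.symm
  have hq : ⟪w', p⟫_ℂ • q = (b * ⟪w', x⟫_ℂ) • y := by
    simpa [contractFst_tensor2, hw'u, smul_smul] using congrArg (contractFst w') hab.symm
  rw [eq_smul_of_smul_eq_smul hp (mul_ne_zero hb hwy) hnp₁.ne_zero,
    eq_smul_of_smul_eq_smul hq (mul_ne_zero hb hw'x) hnp₂.ne_zero, tensor2_smul_smul]
  exact .inr ⟨_, rfl⟩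

/-- Let `u ⊗ v` and `x ⊗ y` be orthogonal product vectors with `u` not proportional to `x` and
`v` not proportional to `y`. Then every product vector in their span is proportional to
`u ⊗ v` or to `x ⊗ y`. -/
theorem stmt8 (d₁ d₂ : ℕ)
    (u x : EuclideanSpace ℂ (Fin d₁)) (v y : EuclideanSpace ℂ (Fin d₂))
    (hu : u ≠ 0) (hx : x ≠ 0) (hv : v ≠ 0) (hy : y ≠ 0)
    (horth : (inner ℂ (tensor2 u v) (tensor2 x y) : ℂ) = 0)
    (hnp₁ : NonProp u x) (hnp₂ : NonProp v y)
    (p : EuclideanSpace ℂ (Fin d₁)) (q : EuclideanSpace ℂ (Fin d₂))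
    (hpq : tensor2 p q ≠ 0)
    (hmem : tensor2 p q ∈
      Submodule.span ℂ ({tensor2 u v, tensor2 x y} : Set (EuclideanSpace ℂ (Fin d₁ × Fin d₂)))) :
    (∃ t : ℂ, tensor2 p q = t • tensor2 u v) ∨
    (∃ t : ℂ, tensor2 p q = t • tensor2 x y) :=
  stmt8_general d₁ d₂ u x v y hnp₁ hnp₂ p q hmem
end

section
/- Define O(n) to be the set of 2^n × n matrices M over a set of formal vector variables such that: each entry in column j is a variable a or its formal perpendicular a^⊥ attached to column j; a variable and its perpendicular occur in at most one column; and any two distinct rows i, j satisfy M_{i,k} = (M_{j,k})^⊥ for some k (orthogonality of rows). For M ∈ O(n) and a variable a, let μ(a) be the number of occurrences of a in M. Then μ(a) = μ(a^⊥) for every vector variable a occurring in M. -/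
/-!
Give every value `b` of column `j` a half `H j b` of the four-point set `Ω = Bool × Bool`, with
perpendicular values getting complementary halves. Row `i` becomes the box `∏ j, H j (M i j)`
of `2 ^ n` points in `Ω ^ n`; orthogonal rows give disjoint boxes, so the `2 ^ n` rows tile the
`4 ^ n` points. Counting the slab `{ω | ω k = x}` box by box shows that every `x ∈ Ω` lies in
`H k (M i k)` for exactly `2 ^ (n - 1)` rows `i`. In column `k`, split `a, aᗮ` along the first
coordinate and all other values along the second: then two points differing only in the first
coordinate are covered by the same rows except that one counts the `a`-rows and the other the
`aᗮ`-rows.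
-/

open Finset

namespace ProductBasis

section Boxes

variable {ι Ω : Type*} [Fintype ι] {n : ℕ} {V : Fin n → Type*}
  {perp : ∀ j, V j → V j} {H : ∀ j, V j → Finset Ω} {M : ι → ∀ j, V j}

variable (H M) in
def rowBox (i : ι) : Finset (Fin n → Ω) :=
  Fintype.piFinset fun j ↦ H j (M i j)

theorem pairwiseDisjoint_rowBox (hdisj : ∀ j b, Disjoint (H j b) (H j (perp j b)))
    (horth : ∀ i i', i ≠ i' → ∃ k, M i k = perp k (M i' k)) :
    ((univ : Finset ι) : Set ι).PairwiseDisjoint (rowBox H M) := by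
  intro i _ i' _ hne
  obtain ⟨k, hk⟩ := horth i i' hne
  refine Fintype.piFinset_disjoint_of_disjoint _ _ (a := k) ?_
  simpa only [hk] using (hdisj k (M i' k)).symm

variable [Fintype Ω] [DecidableEq Ω]

theorem biUnion_rowBox_eq_univ {c : ℕ} (hcard : ∀ j b, #(H j b) = c)
    (hΩ : Fintype.card Ω = 2 * c) (hι : Fintype.card ι = 2 ^ n)
    (hdisj : ∀ j b, Disjoint (H j b) (H j (perp j b)))
    (horth : ∀ i i', i ≠ i' → ∃ k, M i k = perp k (M i' k)) :
    univ.biUnion (rowBox H M) = univ := by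
  apply eq_univ_of_card
  rw [card_biUnion (pairwiseDisjoint_rowBox hdisj horth)]
  simp [rowBox, hcard, hι, hΩ, mul_pow]

theorem card_filter_mem_eq_two_pow {c : ℕ} (hcard : ∀ j b, #(H j b) = c)
    (hΩ : Fintype.card Ω = 2 * c) (hι : Fintype.card ι = 2 ^ n)
    (hdisj : ∀ j b, Disjoint (H j b) (H j (perp j b)))
    (horth : ∀ i i', i ≠ i' → ∃ k, M i k = perp k (M i' k)) (k : Fin n) (x : Ω) :
    #{i | x ∈ H k (M i k)} = 2 ^ (n - 1) := by
  have hc : 0 < c := by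
    have := Fintype.card_pos_iff.mpr ⟨x⟩
    omega
  have hfiber : #{ω : Fin n → Ω | ω k = x} = (2 * c) ^ (n - 1) := by
    have := Fintype.card_filter_piFinset_const (univ : Finset Ω) k x (ι := Fin n)
    simpa [hΩ] using this
  have hsplit : #{ω : Fin n → Ω | ω k = x} = #{i | x ∈ H k (M i k)} * c ^ (n - 1) := by
    rw [← biUnion_rowBox_eq_univ hcard hΩ hι hdisj horth, filter_biUnion,
      card_biUnion ((pairwiseDisjoint_rowBox hdisj horth).mono fun _ ↦ filter_subset _ _)]
    have hbox (i : ι) :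
        #{ω ∈ rowBox H M i | ω k = x} = if x ∈ H k (M i k) then c ^ (n - 1) else 0 := by
      rw [rowBox, Fintype.card_filter_piFinset_eq (α := fun _ ↦ Ω) (fun j ↦ H j (M i j)) k x]
      simp [hcard]
    rw [sum_congr rfl fun i _ ↦ hbox i, sum_ite, sum_const_zero, add_zero, sum_const, smul_eq_mul]
  rw [hsplit, mul_pow] at hfiber
  exact Nat.eq_of_mul_eq_mul_right (pow_pos hc _) hfiber

end Boxes

section Halves

variable {α : Type*} [LinearOrder α] {perp : α → α}

variable (perp) in
def side (b : α) : Bool :=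
  decide (b < perp b)

theorem side_perp (hinv : ∀ b, perp (perp b) = b) (hnfix : ∀ b, perp b ≠ b) (b : α) :
    side perp (perp b) = !side perp b := by
  unfold side
  rw [hinv]
  rcases lt_or_gt_of_ne (hnfix b) with h | h <;> simp [h, h.le]

variable (perp) in
open Classical in
noncomputable def splitHalf (S : Set α) (b : α) : Finset (Bool × Bool) :=
  if b ∈ S then univ.filter (·.1 = side perp b) else univ.filter (·.2 = side perp b)

theorem card_splitHalf (S : Set α) (b : α) : #(splitHalf perp S b) = 2 := by
  unfold splitHalf
  split_ifs <;> cases side perp b <;> rfl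

theorem disjoint_splitHalf (hinv : ∀ b, perp (perp b) = b) (hnfix : ∀ b, perp b ≠ b)
    {S : Set α} (hS : ∀ b, b ∈ S ↔ perp b ∈ S) (b : α) :
    Disjoint (splitHalf perp S b) (splitHalf perp S (perp b)) := by
  unfold splitHalf
  rw [← hS, side_perp hinv hnfix]
  split_ifs <;> simp [disjoint_left]

theorem side_eq_side_iff (hinv : ∀ b, perp (perp b) = b) (hnfix : ∀ b, perp b ≠ b)
    {a b c : α} (hb : b ∈ ({a, perp a} : Set α)) (hc : c ∈ ({a, perp a} : Set α)) :
    side perp b = side perp c ↔ b = c := by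
  rcases hb with rfl | rfl <;> rcases hc with rfl | rfl <;>
    simp [side_perp hinv hnfix, hnfix, (hnfix _).symm]

theorem mem_splitHalf_pair_iff (hinv : ∀ b, perp (perp b) = b) (hnfix : ∀ b, perp b ≠ b)
    {a c : α} (hc : c ∈ ({a, perp a} : Set α)) (b : α) :
    (side perp c, true) ∈ splitHalf perp {a, perp a} b ↔
      b = c ∨ b ∉ ({a, perp a} : Set α) ∧ side perp b = true := by
  unfold splitHalf
  by_cases hb : b ∈ ({a, perp a} : Set α)
  · simp only [hb, if_true, mem_filter, mem_univ, true_and, not_true_eq_false, false_and, or_false]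
    exact (side_eq_side_iff hinv hnfix hc hb).trans eq_comm
  · have hbc : b ≠ c := fun h ↦ hb (h ▸ hc)
    simp only [hb, hbc, if_false, mem_filter, mem_univ, true_and, false_or, not_false_eq_true]
    exact eq_comm

end Halves

end ProductBasis

open ProductBasis in
theorem stmt9_general (n : ℕ) (V : Fin n → Type) (perp : ∀ j, V j → V j)
    (hinv : ∀ j a, perp j (perp j a) = a)
    (hnfix : ∀ j a, perp j a ≠ a)
    (M : Fin (2 ^ n) → ∀ j, V j)
    (horth : ∀ i i', i ≠ i' → ∃ k, M i k = perp k (M i' k))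
    (k : Fin n) (a : V k) :
    {i | M i k = a}.ncard = {i | M i k = perp k a}.ncard := by
  classical
  let _ (j : Fin n) : LinearOrder (V j) := WellOrderingRel.isWellOrder.linearOrder
  let S : ∀ j, Set (V j) := Function.update (fun _ ↦ ∅) k {a, perp k a}
  have hS (j : Fin n) (b : V j) : b ∈ S j ↔ perp j b ∈ S j := by
    rcases eq_or_ne j k with rfl | hj
    · have hperp : Function.Involutive (perp j) := hinv j
      simp [S, hperp.eq_iff, hperp a, or_comm]
    · simp [S, hj]
  have hSk : S k = {a, perp k a} := Function.update_self ..
  have hcount (x : Bool × Bool) : #{i | x ∈ splitHalf (perp k) (S k) (M i k)} = 2 ^ (n - 1) :=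
    card_filter_mem_eq_two_pow (H := fun j ↦ splitHalf (perp j) (S j))
      (fun j b ↦ card_splitHalf (S j) b) (by simp) (by simp)
      (fun j b ↦ disjoint_splitHalf (hinv j) (hnfix j) (hS j) b) horth k x
  have ha := hcount (side (perp k) a, true)
  have ha' := hcount (side (perp k) (perp k a), true)
  simp only [hSk, mem_splitHalf_pair_iff (hinv k) (hnfix k) (a := a) (c := a) (by simp)] at ha
  simp only [hSk, mem_splitHalf_pair_iff (hinv k) (hnfix k) (a := a) (c := perp k a) (by simp)]
    at ha'
  rw [filter_or, card_union_of_disjoint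
    (disjoint_filter.2 fun i _ h ⟨hR, _⟩ ↦ hR (h ▸ by simp))] at ha ha'
  simp only [Set.ncard_eq_toFinset_card', Set.toFinset_ofPred]
  omega

/-- In the combinatorial model `O(n)` of multiqubit orthogonal product bases — a `2^n × n`
matrix whose column `j` takes values in a type `V j` equipped with a fixed-point-free
involution `a ↦ aᗮ`, such that any two distinct rows have perpendicular entries in some
column — every value `a` occurring in a column occurs there exactly as many times as its
perpendicular `aᗮ`. -/
theorem stmt9 (n : ℕ) (V : Fin n → Type) (perp : ∀ j, V j → V j)
    (hinv : ∀ j a, perp j (perp j a) = a)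
    (hnfix : ∀ j a, perp j a ≠ a)
    (M : Fin (2 ^ n) → ∀ j, V j)
    (horth : ∀ i i', i ≠ i' → ∃ k, M i k = perp k (M i' k))
    (k : Fin n) (a : V k) (hocc : ∃ i, M i k = a) :
    {i | M i k = a}.ncard = {i | M i k = perp k a}.ncard :=
  stmt9_general n V perp hinv hnfix M horth k a
end

section
/- In the combinatorial model of a 2-qubit OPB: let M be a 4 × 2 matrix whose columns take values in types V_1, V_2 each equipped with a fixed-point-free involution ⊥, such that any two distinct rows i,j satisfy M_{i,k} = (M_{j,k})^⊥ for some k ∈ {1,2}, and such that each value in column k can be realized by unit vectors in ℂ² (perpendicular values mapping to orthogonal vectors). Then at least one column of M contains exactly one pair {a, a^⊥} of values, i.e., some column has exactly 2 distinct values forming a perpendicular pair, each occurring twice. -/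
/-!
Some column must contain a repeated value: the three rows other than a fixed row `r₀` are each
orthogonal to `r₀` in one of only two columns, so two of them, `i` and `j`, are orthogonal to it
in the same column `k` and hence agree there. Being orthogonal, `i` and `j` then differ in the
other column `k'`, so no further row can be orthogonal to both of them in `k'` (it would force
`M i k' = M j k'`). Hence every other row is orthogonal to `i` or `j` in column `k`, i.e. takes the
value `(M i k)ᗮ` there, and column `k` reads `a, a, aᗮ, aᗮ`.
-/

section

variable {V : Fin 2 → Type} (perp : ∀ k, V k → V k) {ι : Type*} (M : ι → ∀ k, V k)

theorem eq_perp_of_eq_of_ne (hinv : ∀ k a, perp k (perp k a) = a)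
    (hnfix : ∀ k a, perp k a ≠ a) (horth : ∀ i j, i ≠ j → ∃ k, M i k = perp k (M j k))
    {i j r : ι} (hij : i ≠ j) (hri : r ≠ i) (hrj : r ≠ j) {k : Fin 2} (hk : M i k = M j k) :
    M r k = perp k (M i k) := by
  obtain ⟨k', hk'⟩ := horth i j hij
  obtain ⟨k₁, hk₁⟩ := horth r i hri
  obtain ⟨k₂, hk₂⟩ := horth r j hrj
  by_cases e₁ : k₁ = k
  · exact e₁ ▸ hk₁
  by_cases e₂ : k₂ = k
  · subst e₂; rwa [hk]
  have hk'k : k' ≠ k := by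
    rintro rfl
    exact hnfix _ _ (hk ▸ hk').symm
  rw [show k₁ = k' by omega] at hk₁
  rw [show k₂ = k' by omega] at hk₂
  have hij' : M i k' = M j k' := Function.Involutive.injective (hinv k') (hk₁.symm.trans hk₂)
  exact absurd (hij' ▸ hk').symm (hnfix _ _)

theorem exists_ne_eq_of_card_gt [Fintype ι] (hcard : 3 < Fintype.card ι)
    (horth : ∀ i j, i ≠ j → ∃ k, M i k = perp k (M j k)) :
    ∃ i j, i ≠ j ∧ ∃ k, M i k = M j k := by
  classical
  obtain ⟨r₀⟩ : Nonempty ι := Fintype.card_pos_iff.mp (by omega)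
  have : ∀ r ∈ Finset.univ.erase r₀, ∃ k, M r k = perp k (M r₀ k) := fun r hr =>
    horth r r₀ (Finset.ne_of_mem_erase hr)
  choose! col hcol using this
  obtain ⟨i, hi, j, hj, hij, hk⟩ := Finset.exists_ne_map_eq_of_card_lt_of_maps_to
    (s := Finset.univ.erase r₀) (t := Finset.univ) (f := col)
    (by simp; omega) (fun r _ => Finset.mem_coe.2 (Finset.mem_univ _))
  refine ⟨i, j, hij, col i, ?_⟩
  rw [hcol i hi, hk, ← hcol j hj]

end

theorem ncard_eq_two_of_eq_of_ne {ι α : Type*} [Finite ι] (hcard : Nat.card ι = 4)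
    (perp : α → α) (hnfix : ∀ a, perp a ≠ a) (c : ι → α) {i j : ι} (hij : i ≠ j)
    (hj : c j = c i) (hrest : ∀ r, r ≠ i → r ≠ j → c r = perp (c i)) :
    (∀ r, c r = c i ∨ c r = perp (c i)) ∧
      {r | c r = c i}.ncard = 2 ∧ {r | c r = perp (c i)}.ncard = 2 := by
  have hpair : {r | c r = c i} = {i, j} := by
    ext r
    refine ⟨fun hr => ?_, by rintro (rfl | rfl) <;> simp [hj]⟩
    by_contra! h
    simp only [Set.mem_insert_iff, Set.mem_singleton_iff, not_or] at h
    exact hnfix _ (hr ▸ hrest r h.1 h.2).symm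
  have hcompl : {r | c r = perp (c i)} = {r | c r = c i}ᶜ := by
    ext r
    refine ⟨fun (hr : c r = _) (h : c r = _) => hnfix _ (hr ▸ h), fun hr => ?_⟩
    rw [hpair] at hr
    simp only [Set.mem_compl_iff, Set.mem_insert_iff, Set.mem_singleton_iff, not_or] at hr
    exact hrest r hr.1 hr.2
  have hcard_pair : {r | c r = c i}.ncard = 2 := by rw [hpair, Set.ncard_pair hij]
  refine ⟨fun r => ?_, hcard_pair, ?_⟩
  · by_cases hr : c r = c i
    · exact .inl hr
    · exact .inr (hcompl ▸ hr : r ∈ {r | c r = perp (c i)})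
  · rw [hcompl, Set.ncard_compl, hcard_pair, hcard]

theorem stmt10_general (V : Fin 2 → Type) (perp : ∀ k, V k → V k)
    (hinv : ∀ k a, perp k (perp k a) = a)
    (hnfix : ∀ k a, perp k a ≠ a)
    (M : Fin 4 → ∀ k, V k)
    (horth : ∀ i j, i ≠ j → ∃ k, M i k = perp k (M j k)) :
    ∃ k : Fin 2, ∃ a : V k,
      (∀ i, M i k = a ∨ M i k = perp k a) ∧
      {i | M i k = a}.ncard = 2 ∧ {i | M i k = perp k a}.ncard = 2 := by
  obtain ⟨i, j, hij, k, hk⟩ := exists_ne_eq_of_card_gt perp M (by simp) horth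
  exact ⟨k, M i k, ncard_eq_two_of_eq_of_ne (by simp) (perp k) (hnfix k) (M · k) hij hk.symm
    fun r hri hrj => eq_perp_of_eq_of_ne perp M hinv hnfix horth hij hri hrj hk⟩

/-- Combinatorial model of a 2-qubit orthogonal product basis: a `4 × 2` matrix with columns
valued in types carrying fixed-point-free involutions, pairwise "orthogonal" rows, and values
realizable by unit vectors in `ℂ²` (perpendicular values going to orthogonal vectors). Then
some column consists of exactly one perpendicular pair `{a, aᗮ}`, each occurring twice. -/
theorem stmt10 (V : Fin 2 → Type) (perp : ∀ k, V k → V k)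
    (hinv : ∀ k a, perp k (perp k a) = a)
    (hnfix : ∀ k a, perp k a ≠ a)
    (M : Fin 4 → ∀ k, V k)
    (horth : ∀ i j, i ≠ j → ∃ k, M i k = perp k (M j k))
    (hreal : ∀ k, ∃ f : V k → EuclideanSpace ℂ (Fin 2),
      (∀ a, ‖f a‖ = 1) ∧ ∀ a, (inner ℂ (f a) (f (perp k a)) : ℂ) = 0) :
    ∃ k : Fin 2, ∃ a : V k,
      (∀ i, M i k = a ∨ M i k = perp k a) ∧
      {i | M i k = a}.ncard = 2 ∧ {i | M i k = perp k a}.ncard = 2 :=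
  stmt10_general V perp hinv hnfix M horth
end
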